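/- Let Ω ⊂ ℝ² be a convex bounded set with nonempty interior whose two vertical support lines are both angular, and let K < ∞ denote the supremum over nonzero u ∈ U_Ω of (∫_Ω u_x² dx dy)/(∫_Ω u_y² dx dy). Let f : ℝ² → ℝ be continuous with f(ζ₁,ζ₂) = f(0,0) + αζ₁ + βζ₂ − aζ₁² + bζ₂² + o(|ζ|²) as |ζ| → 0, where a > 0, b > 0. If b/a > K, then the zero function u ≡ 0 is a local minimum of the functional F(u) = ∫_Ω f(∇u(x,y)) dx dy on U_Ω with respect to the C¹ norm. -/

import Mathlib

/-!
Fix `ε > 0` with `(a + ε) K ≤ b - ε`. For `u` small in `C¹`, the Taylor expansion gives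
`f(∇u) ≥ f(0) + α u_x + β u_y - (a + ε) u_x² + (b - ε) u_y²` pointwise. The linear terms integrate
to zero: on almost every horizontal (vertical) line, `u` is a concave function of one variable
vanishing at the endpoints of the chord, and since a concave function has a right derivative
everywhere, the fundamental theorem of calculus applies although `u` is only differentiable
almost everywhere. Hence
`F(u) - F(0) ≥ (b - ε) ∫ u_y² - (a + ε) ∫ u_x² ≥ ((b - ε) - (a + ε) K) ∫ u_y² ≥ 0`.
-/

open MeasureTheory Real Set Filter Asymptotics

/-- The partial derivative `u_x` (defined via the full derivative; `0` where `u` is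
not differentiable). -/
noncomputable def uX (u : ℝ × ℝ → ℝ) (p : ℝ × ℝ) : ℝ := fderiv ℝ u p (1, 0)

/-- The partial derivative `u_y`. -/
noncomputable def uY (u : ℝ × ℝ → ℝ) (p : ℝ × ℝ) : ℝ := fderiv ℝ u p (0, 1)

/-- Membership in the class `U_Ω`: continuous concave functions on `Ω`, differentiable
almost everywhere, with bounded gradient, vanishing on `∂Ω`. -/
def MemU (Ω : Set (ℝ × ℝ)) (u : ℝ × ℝ → ℝ) : Prop :=
  ContinuousOn u (closure Ω) ∧ ConcaveOn ℝ Ω u ∧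
    (∀ᵐ p ∂(volume.restrict Ω), DifferentiableAt ℝ u p) ∧
    (∃ C : ℝ, ∀ p ∈ Ω, DifferentiableAt ℝ u p → ‖fderiv ℝ u p‖ ≤ C) ∧
    (∀ p ∈ frontier Ω, u p = 0)

/-- `∫_Ω u_x² dx dy`. -/
noncomputable def Ix (Ω : Set (ℝ × ℝ)) (u : ℝ × ℝ → ℝ) : ℝ := ∫ p in Ω, (uX u p) ^ 2

/-- `∫_Ω u_y² dx dy`. -/
noncomputable def Iy (Ω : Set (ℝ × ℝ)) (u : ℝ × ℝ → ℝ) : ℝ := ∫ p in Ω, (uY u p) ^ 2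

/-- The abscissa of the left vertical support line of `Ω`. -/
noncomputable def leftX (Ω : Set (ℝ × ℝ)) : ℝ := sInf (Prod.fst '' Ω)

/-- The abscissa of the right vertical support line of `Ω`. -/
noncomputable def rightX (Ω : Set (ℝ × ℝ)) : ℝ := sSup (Prod.fst '' Ω)

/-- The vertical support line `{x = x₀}` of `Ω`, touching `Ω` at the contact point
`(x₀, p₂)`, is angular: every `(x,y) ∈ Ω` satisfies `|y - p₂| ≤ C|x - x₀|`. -/
def AngularSupportAt (Ω : Set (ℝ × ℝ)) (x₀ : ℝ) : Prop :=
  ∃ p₂ : ℝ, (x₀, p₂) ∈ closure Ω ∧ ∃ C > 0, ∀ q ∈ Ω, |q.2 - p₂| ≤ C * |q.1 - x₀|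

/-- The `C¹` norm `sup |u| + sup |u_x| + sup |u_y|`, the suprema over the derivatives
being taken over the points where they exist. -/
noncomputable def C1Norm (Ω : Set (ℝ × ℝ)) (u : ℝ × ℝ → ℝ) : ℝ :=
  sSup ((fun p => |u p|) '' Ω) +
    sSup ((fun p => |uX u p|) '' {p ∈ Ω | DifferentiableAt ℝ u p}) +
    sSup ((fun p => |uY u p|) '' {p ∈ Ω | DifferentiableAt ℝ u p})

/-- The resistance functional `F(u) = ∫_Ω f(∇u) dx dy`. -/
noncomputable def Fres (Ω : Set (ℝ × ℝ)) (f : ℝ × ℝ → ℝ) (u : ℝ × ℝ → ℝ) : ℝ :=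
  ∫ p in Ω, f (uX u p, uY u p)

/-- The zero function is a local minimum of `F` on `U_Ω` in the `C¹` norm. -/
def ZeroIsLocalMin (Ω : Set (ℝ × ℝ)) (f : ℝ × ℝ → ℝ) : Prop :=
  ∃ δ : ℝ, 0 < δ ∧ ∀ u : ℝ × ℝ → ℝ, MemU Ω u → C1Norm Ω u < δ →
    Fres Ω f (fun _ => 0) ≤ Fres Ω f u

/-- `n` is an outward normal of a support line to `Ω` at `ξ`. -/
def IsSupportDir (Ω : Set (ℝ × ℝ)) (ξ n : ℝ × ℝ) : Prop :=
  n ≠ 0 ∧ ∀ q ∈ Ω, n.1 * q.1 + n.2 * q.2 ≤ n.1 * ξ.1 + n.2 * ξ.2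

/-- `ξ` is a regular boundary point: the support line at `ξ` is unique. -/
def IsRegularPoint (Ω : Set (ℝ × ℝ)) (ξ : ℝ × ℝ) : Prop :=
  ξ ∈ frontier Ω ∧
    ∀ n m : ℝ × ℝ, IsSupportDir Ω ξ n → IsSupportDir Ω ξ m → ∃ t : ℝ, m = t • n

/-- `ξ` is a singular boundary point: `Ω` has more than one support line at `ξ`. -/
def IsSingularPoint (Ω : Set (ℝ × ℝ)) (ξ : ℝ × ℝ) : Prop :=
  ξ ∈ frontier Ω ∧
    ∃ n m : ℝ × ℝ, IsSupportDir Ω ξ n ∧ IsSupportDir Ω ξ m ∧ ¬∃ t : ℝ, m = t • n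

open Topology

theorem ConcaveOn.intervalIntegral_eq_sub_of_ae_hasDerivAt {g D : ℝ → ℝ} {l r : ℝ}
    (hlr : l ≤ r) (hcont : ContinuousOn g (Icc l r)) (hconc : ConcaveOn ℝ (Ioo l r) g)
    (hD : ∀ᵐ x, x ∈ Ioo l r → HasDerivAt g (D x) x) (hint : IntervalIntegrable D volume l r) :
    ∫ x in l..r, D x = g r - g l := by
  have hright : ∀ x ∈ Ioo l r, HasDerivWithinAt g (derivWithin g (Ioi x) x) (Ioi x) x := by
    intro x hx
    have := (hconc.neg.hasDerivWithinAt_rightDeriv_of_mem_interior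
      (by rwa [interior_Ioo])).differentiableWithinAt.neg
    simpa using this.hasDerivWithinAt
  have hae : ∀ᵐ x, x ∈ uIoc l r → D x = derivWithin g (Ioi x) x := by
    filter_upwards [hD, Measure.ae_ne volume r] with x hx hxr hxI
    rw [uIoc_of_le hlr] at hxI
    exact ((hx ⟨hxI.1, hxI.2.lt_of_ne hxr⟩).hasDerivWithinAt.derivWithin
      (uniqueDiffWithinAt_Ioi x)).symm
  rw [intervalIntegral.integral_congr_ae hae]
  exact intervalIntegral.integral_eq_sub_of_hasDeriv_right_of_le hlr hcont hright
    (hint.congr_ae ((ae_restrict_iff' measurableSet_uIoc).2 hae))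

theorem ConcaveOn.setIntegral_eq_zero_of_eq_zero_on_frontier {S : Set ℝ}
    (hSb : Bornology.IsBounded S) {g D : ℝ → ℝ} (hconc : ConcaveOn ℝ S g)
    (hcont : ContinuousOn g (closure S)) (hzero : ∀ x ∈ frontier S, g x = 0)
    (hD : ∀ᵐ x, x ∈ S → HasDerivAt g (D x) x) (hint : IntegrableOn D S) :
    ∫ x in S, D x = 0 := by
  rcases S.eq_empty_or_nonempty with rfl | hne
  · simp
  set l := sInf S
  set r := sSup S
  have hIcc : S ⊆ Icc l r := subset_Icc_csInf_csSup hSb.bddBelow hSb.bddAbove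
  have hIoo : Ioo l r ⊆ S :=
    (hconc.1.isConnected hne).Ioo_csInf_csSup_subset hSb.bddBelow hSb.bddAbove
  have hlr : l ≤ r := csInf_le_csSup hne hSb.bddBelow hSb.bddAbove
  have hS : S =ᵐ[volume] Ioc l r :=
    (hIcc.eventuallyLE.antisymm (Ioo_ae_eq_Icc.symm.le.trans hIoo.eventuallyLE)).trans
      Ioc_ae_eq_Icc.symm
  have hinterior : interior S ⊆ Ioo l r := (interior_Icc (a := l) (b := r)) ▸ interior_mono hIcc
  have hl : l ∈ frontier S :=
    ⟨csInf_mem_closure hne hSb.bddBelow, fun h => (hinterior h).1.false⟩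
  have hr : r ∈ frontier S :=
    ⟨csSup_mem_closure hne hSb.bddAbove, fun h => (hinterior h).2.false⟩
  have hclosure : Icc l r ⊆ closure S :=
    hconc.1.closure.ordConnected.out (frontier_subset_closure hl) (frontier_subset_closure hr)
  rw [setIntegral_congr_set hS, ← intervalIntegral.integral_of_le hlr,
    (hconc.subset hIoo (convex_Ioo l r)).intervalIntegral_eq_sub_of_ae_hasDerivAt hlr
      (hcont.mono hclosure) (hD.mono fun x hx hxI => hx (hIoo hxI))
      ((intervalIntegrable_iff_integrableOn_Ioc_of_le hlr).2 (hint.congr_set_ae hS.symm)),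
    hzero l hl, hzero r hr, sub_zero]

theorem isBounded_preimage_line {E : Type*} [NormedAddCommGroup E] [NormedSpace ℝ E]
    {Ω : Set E} (hbdd : Bornology.IsBounded Ω) (p₀ : E) {v : E} (hv : v ≠ 0) :
    Bornology.IsBounded {t : ℝ | p₀ + t • v ∈ Ω} := by
  obtain ⟨R, hR⟩ := hbdd.subset_closedBall 0
  refine (Metric.isBounded_closedBall (x := 0) (r := (R + ‖p₀‖) / ‖v‖)).subset fun t ht => ?_
  rw [mem_closedBall_zero_iff, le_div_iff₀ (norm_pos_iff.2 hv), ← norm_smul]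
  have := mem_closedBall_zero_iff.1 (hR ht)
  calc ‖t • v‖ = ‖(p₀ + t • v) - p₀‖ := by rw [add_sub_cancel_left]
    _ ≤ R + ‖p₀‖ := (norm_sub_le _ _).trans (by linarith)

theorem ConcaveOn.integral_indicator_fderiv_line_eq_zero {E : Type*} [NormedAddCommGroup E]
    [NormedSpace ℝ E] [MeasurableSpace E] [BorelSpace E] {Ω : Set E}
    (hbdd : Bornology.IsBounded Ω) {u : E → ℝ} (hconc : ConcaveOn ℝ Ω u)
    (hcont : ContinuousOn u (closure Ω)) (hzero : ∀ p ∈ frontier Ω, u p = 0) {C : ℝ}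
    (hbound : ∀ p ∈ Ω, ‖fderiv ℝ u p‖ ≤ C) (p₀ : E) {v : E} (hv : v ≠ 0)
    (hdiff : ∀ᵐ t : ℝ, p₀ + t • v ∈ Ω → DifferentiableAt ℝ u (p₀ + t • v)) :
    ∫ t : ℝ, Ω.indicator (fun p => fderiv ℝ u p v) (p₀ + t • v) = 0 := by
  set L : ℝ →ᵃ[ℝ] E := AffineMap.lineMap p₀ (p₀ + v)
  have hL : ⇑L = fun t => p₀ + t • v := by
    ext t; simp [L, AffineMap.lineMap_apply_module', add_comm]
  have hLc : Continuous L := by rw [hL]; fun_prop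
  have hconcS := hconc.comp_affineMap L
  rw [hL] at hconcS hLc
  have hSmeas : MeasurableSet {t : ℝ | p₀ + t • v ∈ Ω} := hconcS.1.ordConnected.measurableSet
  have hSb := isBounded_preimage_line hbdd p₀ hv
  change ∫ t, {t : ℝ | p₀ + t • v ∈ Ω}.indicator (fun t => fderiv ℝ u (p₀ + t • v) v) t = 0
  rw [integral_indicator hSmeas]
  refine hconcS.setIntegral_eq_zero_of_eq_zero_on_frontier hSb
    (hcont.comp hLc.continuousOn (hLc.closure_preimage_subset Ω))
    (fun t ht => hzero _ (hLc.frontier_preimage_subset Ω ht)) ?_ ?_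
  · filter_upwards [hdiff] with t ht htS
    have hline : HasDerivAt (fun t : ℝ => p₀ + t • v) v t := by
      simpa using ((hasDerivAt_id t).smul_const v).const_add p₀
    exact (ht htS).hasFDerivAt.comp_hasDerivAt t hline
  · refine Measure.integrableOn_of_bounded (M := C * ‖v‖) hSb.measure_lt_top.ne
      ((measurable_fderiv_apply_const ℝ u v).comp hLc.measurable).aestronglyMeasurable
      (ae_restrict_of_forall_mem hSmeas fun t ht => ?_)
    exact ((fderiv ℝ u _).le_opNorm v).trans
      (mul_le_mul_of_nonneg_right (hbound _ ht) (norm_nonneg v))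

theorem abs_le_sSup_image_differentiableAt {E F : Type*} [NormedAddCommGroup E]
    [NormedSpace ℝ E] [NormedAddCommGroup F] [NormedSpace ℝ F] {Ω : Set E} {u : E → F}
    {w : E → ℝ} (hw : ∀ p, ¬DifferentiableAt ℝ u p → w p = 0) {C : ℝ}
    (hC : ∀ p ∈ Ω, |w p| ≤ C) {p : E} (hp : p ∈ Ω) :
    |w p| ≤ sSup ((fun p => |w p|) '' {p ∈ Ω | DifferentiableAt ℝ u p}) := by
  by_cases hd : DifferentiableAt ℝ u p
  · exact le_csSup ⟨C, by rintro _ ⟨q, hq, rfl⟩; exact hC q hq.1⟩ ⟨p, ⟨hp, hd⟩, rfl⟩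
  · rw [hw p hd, abs_zero]
    exact Real.sSup_nonneg (by rintro _ ⟨q, -, rfl⟩; exact abs_nonneg _)

theorem norm_grad_le_norm_fderiv (u : ℝ × ℝ → ℝ) (p : ℝ × ℝ) :
    ‖(uX u p, uY u p)‖ ≤ ‖fderiv ℝ u p‖ := by
  have h10 : ‖((1 : ℝ), (0 : ℝ))‖ = 1 := by simp
  have h01 : ‖((0 : ℝ), (1 : ℝ))‖ = 1 := by simp
  rw [Prod.norm_mk]
  exact max_le (by simpa [uX, h10] using (fderiv ℝ u p).le_opNorm (1, 0))
    (by simpa [uY, h01] using (fderiv ℝ u p).le_opNorm (0, 1))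

theorem eventually_quadratic_lower_bound_of_isLittleO {f : ℝ × ℝ → ℝ} {α β a b ε : ℝ}
    (hf : (fun ζ : ℝ × ℝ => f ζ - (f 0 + α * ζ.1 + β * ζ.2 - a * ζ.1 ^ 2 + b * ζ.2 ^ 2))
      =o[𝓝 0] fun ζ : ℝ × ℝ => ‖ζ‖ ^ 2) (hε : 0 < ε) :
    ∀ᶠ ζ : ℝ × ℝ in 𝓝 0,
      f 0 + α * ζ.1 + β * ζ.2 - (a + ε) * ζ.1 ^ 2 + (b - ε) * ζ.2 ^ 2 ≤ f ζ := by
  filter_upwards [hf.def hε] with ζ hζ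
  have hsq : ‖ζ‖ ^ 2 ≤ ζ.1 ^ 2 + ζ.2 ^ 2 := by
    rw [Prod.norm_def, Real.norm_eq_abs, Real.norm_eq_abs]
    rcases max_cases |ζ.1| |ζ.2| with ⟨h, -⟩ | ⟨h, -⟩ <;> rw [h, sq_abs] <;>
      nlinarith [sq_nonneg ζ.1, sq_nonneg ζ.2]
  rw [Real.norm_eq_abs, Real.norm_of_nonneg (by positivity), abs_le] at hζ
  nlinarith [hζ.1]

theorem exists_pos_add_mul_le_sub {a b K : ℝ} (h : a * K < b) :
    ∃ ε > 0, (a + ε) * K ≤ b - ε := by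
  have hlim : Tendsto (fun ε : ℝ => (a + ε) * K + ε) (𝓝[>] 0) (𝓝 (a * K)) :=
    ((by fun_prop : Continuous fun ε : ℝ => (a + ε) * K + ε).tendsto' 0 _
      (by simp)).mono_left nhdsWithin_le_nhds
  obtain ⟨ε, hεb, hε⟩ := ((hlim.eventually (gt_mem_nhds h)).and self_mem_nhdsWithin).exists
  exact ⟨ε, hε, by linarith⟩

namespace MemU

variable {Ω : Set (ℝ × ℝ)} {u : ℝ × ℝ → ℝ}

theorem exists_norm_fderiv_le (hu : MemU Ω u) : ∃ C, ∀ p ∈ Ω, ‖fderiv ℝ u p‖ ≤ C := by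
  obtain ⟨C, hC⟩ := hu.2.2.2.1
  refine ⟨max C 0, fun p hp => ?_⟩
  by_cases hd : DifferentiableAt ℝ u p
  · exact (hC p hp hd).trans (le_max_left _ _)
  · simp [fderiv_zero_of_not_differentiableAt hd]

theorem nullMeasurableSet (hu : MemU Ω u) : NullMeasurableSet Ω :=
  Convex.nullMeasurableSet (μ := volume) hu.2.1.1

theorem ae_differentiableAt (hu : MemU Ω u) : ∀ᵐ p, p ∈ Ω → DifferentiableAt ℝ u p :=
  (ae_restrict_iff'₀ hu.nullMeasurableSet).1 hu.2.2.1

theorem integrableOn_comp_grad (hbdd : Bornology.IsBounded Ω) (hu : MemU Ω u)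
    {G : ℝ × ℝ → ℝ} (hG : Continuous G) : IntegrableOn (fun p => G (uX u p, uY u p)) Ω := by
  obtain ⟨C, hC⟩ := hu.exists_norm_fderiv_le
  obtain ⟨M, hM⟩ := (isCompact_closedBall (0 : ℝ × ℝ) C).exists_bound_of_continuousOn
    hG.continuousOn
  refine Measure.integrableOn_of_bounded (M := M) hbdd.measure_lt_top.ne
    (hG.measurable.comp ((measurable_fderiv_apply_const ℝ u _).prodMk
      (measurable_fderiv_apply_const ℝ u _))).aestronglyMeasurable ?_
  filter_upwards [ae_restrict_mem₀ hu.nullMeasurableSet] with p hp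
  exact hM _ (mem_closedBall_zero_iff.2 ((norm_grad_le_norm_fderiv u p).trans (hC p hp)))

theorem integral_uX_eq_zero (hbdd : Bornology.IsBounded Ω) (hu : MemU Ω u) :
    ∫ p in Ω, uX u p = 0 := by
  obtain ⟨C, hC⟩ := hu.exists_norm_fderiv_le
  rw [← integral_indicator₀ hu.nullMeasurableSet, Measure.volume_eq_prod, integral_prod_symm _
    ((hu.integrableOn_comp_grad hbdd continuous_fst).integrable_indicator₀ hu.nullMeasurableSet)]
  refine integral_eq_zero_of_ae ?_
  filter_upwards [Measure.ae_ae_of_ae_prod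
    (Measure.measurePreserving_swap.quasiMeasurePreserving.ae hu.ae_differentiableAt)] with y hy
  have hline := hu.2.1.integral_indicator_fderiv_line_eq_zero hbdd hu.1 hu.2.2.2.2 hC (0, y)
    (v := (1, 0)) (by simp) (by simpa using hy)
  simp only [Prod.smul_mk, smul_eq_mul, mul_one, mul_zero, Prod.mk_add_mk, zero_add, add_zero]
    at hline
  exact hline

theorem integral_uY_eq_zero (hbdd : Bornology.IsBounded Ω) (hu : MemU Ω u) :
    ∫ p in Ω, uY u p = 0 := by
  obtain ⟨C, hC⟩ := hu.exists_norm_fderiv_le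
  rw [← integral_indicator₀ hu.nullMeasurableSet, Measure.volume_eq_prod, integral_prod _
    ((hu.integrableOn_comp_grad hbdd continuous_snd).integrable_indicator₀ hu.nullMeasurableSet)]
  refine integral_eq_zero_of_ae ?_
  filter_upwards [Measure.ae_ae_of_ae_prod hu.ae_differentiableAt] with x hx
  have hline := hu.2.1.integral_indicator_fderiv_line_eq_zero hbdd hu.1 hu.2.2.2.2 hC (x, 0)
    (v := (0, 1)) (by simp) (by simpa using hx)
  simp only [Prod.smul_mk, smul_eq_mul, mul_one, mul_zero, Prod.mk_add_mk, zero_add, add_zero]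
    at hline
  exact hline

theorem norm_grad_lt_of_C1Norm_lt (hu : MemU Ω u) {δ : ℝ} (hδ : C1Norm Ω u < δ) {p : ℝ × ℝ}
    (hp : p ∈ Ω) : ‖(uX u p, uY u p)‖ < δ := by
  obtain ⟨C, hC⟩ := hu.exists_norm_fderiv_le
  have hX := abs_le_sSup_image_differentiableAt (u := u) (w := uX u)
    (fun q hq => by simp [uX, fderiv_zero_of_not_differentiableAt hq])
    (fun q hq => (norm_fst_le _).trans ((norm_grad_le_norm_fderiv u q).trans (hC q hq))) hp
  have hY := abs_le_sSup_image_differentiableAt (u := u) (w := uY u)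
    (fun q hq => by simp [uY, fderiv_zero_of_not_differentiableAt hq])
    (fun q hq => (norm_snd_le _).trans ((norm_grad_le_norm_fderiv u q).trans (hC q hq))) hp
  have hsup : 0 ≤ sSup ((fun p => |u p|) '' Ω) :=
    Real.sSup_nonneg (by rintro _ ⟨q, -, rfl⟩; exact abs_nonneg _)
  have hX0 := (abs_nonneg _).trans hX
  have hY0 := (abs_nonneg _).trans hY
  rw [Prod.norm_mk, Real.norm_eq_abs, Real.norm_eq_abs]
  unfold C1Norm at hδ
  exact max_lt (by linarith) (by linarith)

theorem sub_mul_Ix_add_mul_Iy_le_Fres (hbdd : Bornology.IsBounded Ω) (hu : MemU Ω u)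
    {f : ℝ × ℝ → ℝ} (hf : Continuous f) {α β A B : ℝ}
    (hpt : ∀ p ∈ Ω, f 0 + α * uX u p + β * uY u p - A * uX u p ^ 2 + B * uY u p ^ 2
      ≤ f (uX u p, uY u p)) :
    Fres Ω f (fun _ => 0) - A * Ix Ω u + B * Iy Ω u ≤ Fres Ω f u := by
  have hX : IntegrableOn (uX u) Ω := hu.integrableOn_comp_grad hbdd continuous_fst
  have hY : IntegrableOn (uY u) Ω := hu.integrableOn_comp_grad hbdd continuous_snd
  have hX2 : IntegrableOn (fun p => uX u p ^ 2) Ω :=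
    hu.integrableOn_comp_grad hbdd (G := fun ζ => ζ.1 ^ 2) (by fun_prop)
  have hY2 : IntegrableOn (fun p => uY u p ^ 2) Ω :=
    hu.integrableOn_comp_grad hbdd (G := fun ζ => ζ.2 ^ 2) (by fun_prop)
  have hc : IntegrableOn (fun _ => f 0) Ω := integrableOn_const hbdd.measure_lt_top.ne
  have hF0 : Fres Ω f (fun _ => 0) = ∫ _ in Ω, f 0 := by
    simp only [Fres, uX, uY, fderiv_const_apply, zero_apply, Prod.mk_zero_zero]
  have h1 : IntegrableOn (fun p => f 0 + α * uX u p) Ω := hc.add (hX.const_mul α)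
  have h2 : IntegrableOn (fun p => f 0 + α * uX u p + β * uY u p) Ω := h1.add (hY.const_mul β)
  have h3 : IntegrableOn (fun p => f 0 + α * uX u p + β * uY u p - A * uX u p ^ 2) Ω :=
    h2.sub (hX2.const_mul A)
  calc Fres Ω f (fun _ => 0) - A * Ix Ω u + B * Iy Ω u
      = ∫ p in Ω, (f 0 + α * uX u p + β * uY u p - A * uX u p ^ 2 + B * uY u p ^ 2) := by
        rw [integral_add h3 (hY2.const_mul B), integral_sub h2 (hX2.const_mul A),
          integral_add h1 (hY.const_mul β), integral_add hc (hX.const_mul α),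
          integral_const_mul, integral_const_mul, integral_const_mul, integral_const_mul,
          hu.integral_uX_eq_zero hbdd, hu.integral_uY_eq_zero hbdd, hF0, Ix, Iy]
        ring
    _ ≤ Fres Ω f u :=
      setIntegral_mono_on₀ (h3.add (hY2.const_mul B)) (hu.integrableOn_comp_grad hbdd hf)
        hu.nullMeasurableSet hpt

end MemU

theorem stmt7_general (Ω : Set (ℝ × ℝ)) (hbdd : Bornology.IsBounded Ω) (K : ℝ)
    (hKub : ∀ u : ℝ × ℝ → ℝ, MemU Ω u → Ix Ω u ≤ K * Iy Ω u)
    (f : ℝ × ℝ → ℝ) (hf : Continuous f) (α β a b : ℝ) (ha : 0 < a)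
    (hTaylor : (fun ζ : ℝ × ℝ =>
        f ζ - (f 0 + α * ζ.1 + β * ζ.2 - a * ζ.1 ^ 2 + b * ζ.2 ^ 2))
        =o[nhds (0 : ℝ × ℝ)] fun ζ : ℝ × ℝ => ‖ζ‖ ^ 2)
    (hba : K < b / a) :
    ZeroIsLocalMin Ω f := by
  obtain ⟨ε, hε, hεK⟩ := exists_pos_add_mul_le_sub (by rwa [lt_div_iff₀ ha, mul_comm] at hba)
  obtain ⟨δ, hδ, hlower⟩ :=
    Metric.eventually_nhds_iff.1 (eventually_quadratic_lower_bound_of_isLittleO hTaylor hε)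
  refine ⟨δ, hδ, fun u hu hC1 => ?_⟩
  have hF := hu.sub_mul_Ix_add_mul_Iy_le_Fres hbdd hf fun p hp =>
    hlower (by rw [dist_zero_right]; exact hu.norm_grad_lt_of_C1Norm_lt hC1 hp)
  have hIy : 0 ≤ Iy Ω u := integral_nonneg fun p => sq_nonneg _
  have hIx : (a + ε) * Ix Ω u ≤ (b - ε) * Iy Ω u :=
    (mul_le_mul_of_nonneg_left (hKub u hu) (by positivity)).trans
      (by rw [← mul_assoc]; exact mul_le_mul_of_nonneg_right hεK hIy)
  linarith

/-- Both vertical support lines angular, `K` the (finite) supremum of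
`(∫_Ω u_x²)/(∫_Ω u_y²)` over nonzero `u ∈ U_Ω`. If
`f(ζ) = f(0) + αζ₁ + βζ₂ - aζ₁² + bζ₂² + o(|ζ|²)` with `a, b > 0` and `b/a > K`,
then `u ≡ 0` is a local minimum. -/
theorem stmt7 (Ω : Set (ℝ × ℝ)) (hconv : Convex ℝ Ω) (hbdd : Bornology.IsBounded Ω)
    (hint : (interior Ω).Nonempty)
    (hangL : AngularSupportAt Ω (leftX Ω)) (hangR : AngularSupportAt Ω (rightX Ω))
    (K : ℝ) (hK0 : 0 < K)
    (hKub : ∀ u : ℝ × ℝ → ℝ, MemU Ω u → Ix Ω u ≤ K * Iy Ω u)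
    (hKlub : ∀ K' : ℝ, K' < K → ∃ u : ℝ × ℝ → ℝ, MemU Ω u ∧ (∃ p ∈ Ω, u p ≠ 0) ∧
      K' * Iy Ω u < Ix Ω u)
    (f : ℝ × ℝ → ℝ) (hf : Continuous f) (α β a b : ℝ) (ha : 0 < a) (hb : 0 < b)
    (hTaylor : (fun ζ : ℝ × ℝ =>
        f ζ - (f 0 + α * ζ.1 + β * ζ.2 - a * ζ.1 ^ 2 + b * ζ.2 ^ 2))
        =o[nhds (0 : ℝ × ℝ)] fun ζ : ℝ × ℝ => ‖ζ‖ ^ 2)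
    (hba : K < b / a) :
    ZeroIsLocalMin Ω f :=
  stmt7_general Ω hbdd K hKub f hf α β a b ha hTaylor hba
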